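/- arXiv:math/0207294 — 4 statements merged into one kernel-verified Lean document; each statement's English description precedes it below -/
import Mathlib

section
/- The q-series ∏_{m=1}^∞ ((1+q^{2m-1})(1−q^{2m-1})^{-2})^4 (1−q^{4m})^{-8} (1−q^{8m-4})^{-8} has nonnegative coefficients. -/
open PowerSeries Finset

/-- Nonnegative coefficients predicate. -/
def NonnegCoeffs (f : PowerSeries ℚ) : Prop := ∀ n, 0 ≤ PowerSeries.coeff n f

lemma NonnegCoeffs.mul {f g : PowerSeries ℚ} (hf : NonnegCoeffs f) (hg : NonnegCoeffs g) :
    NonnegCoeffs (f * g) := by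
  intro n
  rw [PowerSeries.coeff_mul]
  exact Finset.sum_nonneg fun p _ => mul_nonneg (hf p.1) (hg p.2)

lemma NonnegCoeffs.one : NonnegCoeffs 1 := by
  intro n
  rw [PowerSeries.coeff_one]
  split <;> norm_num

lemma NonnegCoeffs.pow {f : PowerSeries ℚ} (hf : NonnegCoeffs f) (k : ℕ) :
    NonnegCoeffs (f ^ k) := by
  induction k with
  | zero => simpa using NonnegCoeffs.one
  | succ k ih => rw [pow_succ]; exact ih.mul hf

lemma inv_one_sub_X_pow (k : ℕ) (hk : 0 < k) :
    ((1 - (X : PowerSeries ℚ) ^ k)⁻¹) =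
      PowerSeries.mk fun n => if k ∣ n then (1 : ℚ) else 0 := by
  rw [PowerSeries.inv_eq_iff_mul_eq_one]
  · ext n
    rw [mul_sub, mul_one, map_sub, PowerSeries.coeff_mul_X_pow', PowerSeries.coeff_mk]
    rcases eq_or_ne n 0 with rfl | hn
    · have : ¬ k ≤ 0 := by omega
      simp [this, PowerSeries.coeff_one]
    · rw [PowerSeries.coeff_one, if_neg hn]
      by_cases h : k ≤ n
      · rw [if_pos h, PowerSeries.coeff_mk]
        have : k ∣ n ↔ k ∣ n - k := by
          constructor
          · intro h'; exact (Nat.dvd_sub h' dvd_rfl)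
          · intro h'
            have := Nat.dvd_add h' (dvd_refl k)
            rwa [Nat.sub_add_cancel h] at this
        by_cases hd : k ∣ n
        · rw [if_pos hd, if_pos (this.mp hd)]; ring
        · rw [if_neg hd, if_neg (fun c => hd (this.mpr c))]; ring
      · rw [if_neg h]
        have : ¬ k ∣ n := fun c => h (Nat.le_of_dvd (Nat.pos_of_ne_zero hn) c)
        rw [if_neg this]; ring
  · simp [PowerSeries.constantCoeff_one, hk.ne']

lemma nonneg_inv_one_sub (k : ℕ) (hk : 0 < k) :
    NonnegCoeffs ((1 - (X : PowerSeries ℚ) ^ k)⁻¹) := by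
  rw [inv_one_sub_X_pow k hk]
  intro n
  rw [PowerSeries.coeff_mk]
  split <;> norm_num

lemma nonneg_one_add (k : ℕ) : NonnegCoeffs (1 + (X : PowerSeries ℚ) ^ k) := by
  intro n
  rw [map_add, PowerSeries.coeff_one, PowerSeries.coeff_X_pow]
  split <;> split <;> norm_num

/-- The `q`-series `∏_{m=1}^∞ ((1+q^{2m-1})(1−q^{2m-1})^{-2})^4 (1−q^{4m})^{-8} (1−q^{8m-4})^{-8}`
has nonnegative coefficients.  (The `n`-th coefficient of the infinite product equals that of
the product truncated at `m ≤ n`.) -/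
theorem nonneg_coeffs_prod_shadow (n : ℕ) :
    0 ≤ PowerSeries.coeff n
      (∏ m ∈ Finset.Icc 1 n,
        (((1 + (X : PowerSeries ℚ) ^ (2 * m - 1)) * (1 - (X : PowerSeries ℚ) ^ (2 * m - 1))⁻¹ ^ 2) ^ 4
          * (1 - (X : PowerSeries ℚ) ^ (4 * m))⁻¹ ^ 8
          * (1 - (X : PowerSeries ℚ) ^ (8 * m - 4))⁻¹ ^ 8)) := by
  have key : NonnegCoeffs (∏ m ∈ Finset.Icc 1 n,
      (((1 + (X : PowerSeries ℚ) ^ (2 * m - 1)) * (1 - (X : PowerSeries ℚ) ^ (2 * m - 1))⁻¹ ^ 2) ^ 4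
        * (1 - (X : PowerSeries ℚ) ^ (4 * m))⁻¹ ^ 8
        * (1 - (X : PowerSeries ℚ) ^ (8 * m - 4))⁻¹ ^ 8)) := by
    refine Finset.prod_induction _ NonnegCoeffs (fun _ _ => NonnegCoeffs.mul)
      NonnegCoeffs.one (fun m hm => ?_)
    simp only [Finset.mem_Icc] at hm
    have h1 : 0 < 2 * m - 1 := by omega
    have h2 : 0 < 4 * m := by omega
    have h3 : 0 < 8 * m - 4 := by omega
    exact ((((nonneg_one_add _).mul ((nonneg_inv_one_sub _ h1).pow 2)).pow 4).mul
      ((nonneg_inv_one_sub _ h2).pow 8)).mul ((nonneg_inv_one_sub _ h3).pow 8)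
  exact key n
end

section
/- For an integral lattice Λ and any characteristic vector w (i.e. w ∈ Λ with w·u ≡ u·u mod 2 for all u ∈ Λ), any two characteristic vectors w, w′ satisfy w·w ≡ w′·w′ (mod 8) when Λ is unimodular. -/
/-- In a positive definite unimodular lattice `Λ`, any two characteristic vectors
`w, w′` (i.e. `w·u ≡ u·u (mod 2)` for all `u ∈ Λ`) satisfy `w·w ≡ w′·w′ (mod 8)`. -/
theorem characteristic_vectors_norm_mod_eight (n : ℕ)
    (B : LinearMap.BilinForm ℚ (Fin n → ℚ))
    (hsymm : ∀ x y, B x y = B y x)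
    (hpos : ∀ x, x ≠ 0 → 0 < B x x)
    (Λ : Submodule ℤ (Fin n → ℚ))
    (hspan : Submodule.span ℚ (Λ : Set (Fin n → ℚ)) = ⊤)
    (hselfdual : ∀ v : Fin n → ℚ, v ∈ Λ ↔ ∀ u ∈ Λ, ∃ k : ℤ, B v u = (k : ℚ))
    (w w' : Fin n → ℚ) (hw : w ∈ Λ) (hw' : w' ∈ Λ)
    (hchar : ∀ u ∈ Λ, ∃ k : ℤ, B w u - B u u = 2 * (k : ℚ))
    (hchar' : ∀ u ∈ Λ, ∃ k : ℤ, B w' u - B u u = 2 * (k : ℚ)) :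
    ∃ k : ℤ, B w w - B w' w' = 8 * (k : ℚ) := by
  set v : Fin n → ℚ := (2⁻¹ : ℚ) • (w - w') with hv_def
  have hBv : ∀ u, B v u = 2⁻¹ * (B w u - B w' u) := by
    intro u
    simp [hv_def, map_sub, LinearMap.sub_apply, LinearMap.smul_apply, smul_eq_mul]
  have hvΛ : v ∈ Λ := by
    rw [hselfdual]
    intro u hu
    obtain ⟨k1, hk1⟩ := hchar u hu
    obtain ⟨k2, hk2⟩ := hchar' u hu
    refine ⟨k1 - k2, ?_⟩
    rw [hBv u]
    push_cast
    linarith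
  obtain ⟨k, hk⟩ := hchar' v hvΛ
  obtain ⟨m, hm⟩ := (hselfdual v).mp hvΛ v hvΛ
  have hw_eq : w = w' + (2 : ℚ) • v := by
    simp [hv_def, smul_smul]
  have expand : B w w = B w' w' + 4 * B w' v + 4 * B v v := by
    conv_lhs => rw [hw_eq]
    simp only [map_add, LinearMap.add_apply, map_smul, LinearMap.smul_apply, smul_eq_mul]
    rw [hsymm v w']
    ring
  refine ⟨k + m, ?_⟩
  push_cast
  linarith
end

section
/- For a lattice Λ in ℚⁿ and sets of primes Π₁, Π₂, the Π-dual operation satisfies (Λ^{*Π₁})^{*Π₂} = Λ^{*(Π₁ Δ Π₂)}, where Δ denotes symmetric difference. In particular (Λ^{*Π})^{*Π} = Λ. -/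
variable {n : ℕ}

/-- The dual lattice: vectors pairing integrally with all of `Λ`. -/
def dualLattice (B : LinearMap.BilinForm ℚ (Fin n → ℚ)) (Λ : Set (Fin n → ℚ)) :
    Set (Fin n → ℚ) :=
  {v | ∀ u ∈ Λ, ∃ k : ℤ, B v u = (k : ℚ)}

/-- The `Π`-dual of a lattice `Λ`:
`Λ^{*Π} = {v : v·Λ ⊆ ℤ_p for p ∈ Π, and v·Λ* ⊆ ℤ_p for p ∉ Π}`,
where membership of a rational number in `ℤ_p` is expressed by nonnegativity of its
`p`-adic valuation. -/
def piDual (B : LinearMap.BilinForm ℚ (Fin n → ℚ)) (Λ : Set (Fin n → ℚ)) (P : Set ℕ) :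
    Set (Fin n → ℚ) :=
  {v | ∀ p : ℕ, p.Prime →
    ((p ∈ P → ∀ u ∈ Λ, 0 ≤ padicValRat p (B v u)) ∧
     (p ∉ P → ∀ u ∈ dualLattice B Λ, 0 ≤ padicValRat p (B v u)))}

/-- The subring of `p`-integral rationals. -/
def Ip (p : ℕ) (hp : p.Prime) : Subring ℚ where
  carrier := {x | 0 ≤ padicValRat p x}
  zero_mem' := by simp [padicValRat.zero]
  one_mem' := by simp [padicValRat.one]
  neg_mem' := by intro x hx; simpa [padicValRat.neg] using hx
  add_mem' := by
    haveI := Fact.mk hp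
    intro a b ha hb
    rcases eq_or_ne (a + b) 0 with h | h
    · simp [Set.mem_setOf_eq, h, padicValRat.zero]
    · exact le_trans (le_min ha hb) (padicValRat.min_le_padicValRat_add h)
  mul_mem' := by
    haveI := Fact.mk hp
    intro a b ha hb
    rcases eq_or_ne a 0 with rfl | ha0
    · simp [padicValRat.zero]
    rcases eq_or_ne b 0 with rfl | hb0
    · simp [padicValRat.zero]
    · show 0 ≤ padicValRat p (a * b)
      rw [padicValRat.mul ha0 hb0]
      exact add_nonneg ha hb

lemma mem_Ip {p : ℕ} {hp : p.Prime} {x : ℚ} : x ∈ Ip p hp ↔ 0 ≤ padicValRat p x := Iff.rfl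

lemma intCast_mem_Ip {p : ℕ} {hp : p.Prime} (k : ℤ) : (k : ℚ) ∈ Ip p hp := by
  rw [mem_Ip, padicValRat.of_int]
  exact Int.natCast_nonneg _

lemma exists_int_of_forall_Ip {x : ℚ} (h : ∀ p : ℕ, (hp : p.Prime) → x ∈ Ip p hp) :
    ∃ k : ℤ, x = (k : ℚ) := by
  refine ⟨x.num, ?_⟩
  have hden : x.den = 1 := by
    by_contra hd
    obtain ⟨p, hp, hpd⟩ := Nat.exists_prime_and_dvd hd
    haveI := Fact.mk hp
    have h1 : padicValInt p x.num = 0 := by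
      unfold padicValInt
      refine padicValNat.eq_zero_of_not_dvd (fun hnum => ?_)
      have hg : p ∣ Nat.gcd x.num.natAbs x.den := Nat.dvd_gcd hnum hpd
      rw [x.reduced] at hg
      exact hp.one_lt.ne' (Nat.dvd_one.mp hg)
    have h2 : 1 ≤ padicValNat p x.den :=
      one_le_padicValNat_of_dvd x.den_nz hpd
    have h3 := (mem_Ip (hp := hp)).mp (h p hp)
    rw [padicValRat] at h3
    omega
  exact ((Rat.den_eq_one_iff x).mp hden).symm

lemma Ip_of_natCast_mul {p : ℕ} {hp : p.Prime} {c : ℕ} (hc : c ≠ 0) (hpc : ¬ p ∣ c)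
    {x : ℚ} (h : (c : ℚ) * x ∈ Ip p hp) : x ∈ Ip p hp := by
  haveI := Fact.mk hp
  rcases eq_or_ne x 0 with rfl | hx0
  · exact Subring.zero_mem _
  have hc0 : (c : ℚ) ≠ 0 := Nat.cast_ne_zero.mpr hc
  have hcv : padicValRat p (c : ℚ) = 0 := by
    rw [padicValRat.of_nat]
    exact_mod_cast congrArg (Nat.cast (R := ℤ)) (padicValNat.eq_zero_of_not_dvd hpc)
  rw [mem_Ip] at h ⊢
  rw [padicValRat.mul hc0 hx0, hcv] at h
  omega

open Submodule LinearMap in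
lemma exists_denom (B : LinearMap.BilinForm ℚ (Fin n → ℚ)) {ι : Type} [Fintype ι]
    (e f : ι → (Fin n → ℚ)) :
    ∃ D : ℕ, D ≠ 0 ∧ ∀ u ∈ span ℤ (Set.range e), ∀ w ∈ span ℤ (Set.range f),
      ∃ k : ℤ, (D : ℚ) * B u w = (k : ℚ) := by
  classical
  refine ⟨∏ i, ∏ j, (B (e i) (f j)).den, ?_, ?_⟩
  · exact Finset.prod_ne_zero_iff.mpr fun i _ =>
      Finset.prod_ne_zero_iff.mpr fun j _ => (B (e i) (f j)).den_nz
  set D : ℕ := ∏ i, ∏ j, (B (e i) (f j)).den with hD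
  have hone : ∀ x : ℚ, x.den ∣ D → ∃ k : ℤ, (D : ℚ) * x = (k : ℚ) := by
    intro x ⟨m, hm⟩
    refine ⟨m * x.num, ?_⟩
    have hx : (x.den : ℚ) * x = x.num := by
      rw [mul_comm]
      exact_mod_cast Rat.mul_den_eq_num x
    push_cast
    rw [hm]
    push_cast
    rw [mul_comm (x.den : ℚ) (m : ℚ), mul_assoc, hx]
  have step1 : ∀ i, ∀ w ∈ span ℤ (Set.range f), ∃ k : ℤ, (D : ℚ) * B (e i) w = (k : ℚ) := by
    intro i w hw
    induction hw using Submodule.span_induction with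
    | mem x hx =>
      obtain ⟨j, rfl⟩ := hx
      refine hone _ (dvd_trans ?_ (Finset.dvd_prod_of_mem
        (fun i => ∏ j, (B (e i) (f j)).den) (Finset.mem_univ i)))
      exact Finset.dvd_prod_of_mem (fun j => (B (e i) (f j)).den) (Finset.mem_univ j)
    | zero => exact ⟨0, by simp⟩
    | add x y hx hy ihx ihy =>
      obtain ⟨k₁, h₁⟩ := ihx; obtain ⟨k₂, h₂⟩ := ihy
      exact ⟨k₁ + k₂, by rw [map_add, mul_add, h₁, h₂]; push_cast; ring⟩
    | smul a x hx ih =>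
      obtain ⟨k, hk⟩ := ih
      refine ⟨a * k, ?_⟩
      rw [← Int.cast_smul_eq_zsmul ℚ, map_smul, smul_eq_mul]
      push_cast
      rw [mul_left_comm, hk]
  intro u hu
  induction hu using Submodule.span_induction with
  | mem x hx => obtain ⟨i, rfl⟩ := hx; exact step1 i
  | zero => exact fun w hw => ⟨0, by simp⟩
  | add x y hx hy ihx ihy =>
    intro w hw
    obtain ⟨k₁, h₁⟩ := ihx w hw; obtain ⟨k₂, h₂⟩ := ihy w hw
    exact ⟨k₁ + k₂, by rw [LinearMap.BilinForm.add_left, mul_add, h₁, h₂]; push_cast; ring⟩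
  | smul a x hx ih =>
    intro w hw
    obtain ⟨k, hk⟩ := ih w hw
    refine ⟨a * k, ?_⟩
    rw [← Int.cast_smul_eq_zsmul ℚ, LinearMap.BilinForm.smul_left]
    push_cast
    rw [mul_left_comm, hk]

open Submodule in
lemma exists_basis (Λ : Submodule ℤ (Fin n → ℚ)) (hfg : Λ.FG)
    (hspan : Submodule.span ℚ (Λ : Set (Fin n → ℚ)) = ⊤) :
    ∃ (ι : Type) (_ : Fintype ι) (b : Module.Basis ι ℚ (Fin n → ℚ)),
      Λ = span ℤ (Set.range ⇑b) := by
  haveI : Module.Finite ℤ Λ := Module.Finite.iff_fg.mpr hfg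
  haveI : NoZeroSMulDivisors ℤ Λ := by
    constructor
    intro c x h
    have h' : c • (x : Fin n → ℚ) = 0 := by
      have := congrArg (Subtype.val) h
      simpa using this
    rcases smul_eq_zero.mp h' with h | h
    · exact Or.inl h
    · exact Or.inr (Subtype.ext h)
  haveI : Module.Free ℤ Λ := Module.free_of_finite_type_torsion_free'
  let ι := Module.Free.ChooseBasisIndex ℤ Λ
  let c : Module.Basis ι ℤ Λ := Module.Free.chooseBasis ℤ Λ
  let v : ι → (Fin n → ℚ) := fun i => (c i : Fin n → ℚ)
  have hrange : Set.range v = Λ.subtype '' Set.range ⇑c := by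
    rw [← Set.range_comp]; rfl
  have hsp : span ℤ (Set.range v) = Λ := by
    rw [hrange, span_image, c.span_eq, Submodule.map_top, range_subtype]
  have h1 : LinearIndependent ℤ v := c.linearIndependent.map' Λ.subtype (ker_subtype Λ)
  have hli : LinearIndependent ℚ v := (LinearIndependent.iff_fractionRing ℤ ℚ).mp h1
  have hsp' : ⊤ ≤ span ℚ (Set.range v) := by
    rw [← span_span_of_tower (R := ℤ), hsp, hspan]
  exact ⟨ι, inferInstance, Module.Basis.mk hli hsp', by rw [Module.Basis.coe_mk, hsp]⟩

open Submodule in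
lemma dualLattice_span (B : LinearMap.BilinForm ℚ (Fin n → ℚ)) (hB : B.Nondegenerate)
    {ι : Type} [Fintype ι] [DecidableEq ι] (e : Module.Basis ι ℚ (Fin n → ℚ)) :
    dualLattice B ↑(span ℤ (Set.range ⇑e))
      = ↑(span ℤ (Set.range ⇑(B.dualBasis hB e))) := by
  rw [← LinearMap.BilinForm.dualSubmodule_span_of_basis B hB e]
  ext v
  simp only [dualLattice, Set.mem_setOf_eq, SetLike.mem_coe,
    LinearMap.BilinForm.mem_dualSubmodule, Submodule.mem_one]
  refine forall₂_congr fun u hu => exists_congr fun k => ?_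
  rw [algebraMap_int_eq, eq_comm]
  rfl

lemma exists_scaled_mem (B : LinearMap.BilinForm ℚ (Fin n → ℚ)) (S T : Set (Fin n → ℚ))
    (Q : Set ℕ)
    (hST : ∀ u ∈ S, ∀ w ∈ T, ∃ k : ℤ, B u w = (k : ℚ))
    (D : ℕ) (hD : D ≠ 0)
    (hDS : ∀ u ∈ S, ∀ w ∈ S, ∃ k : ℤ, (D : ℚ) * B u w = (k : ℚ))
    (p : ℕ) (hp : p.Prime) (hpQ : p ∉ Q) (u : Fin n → ℚ) (hu : u ∈ S) :
    ∃ c : ℕ, c ≠ 0 ∧ ¬ p ∣ c ∧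
      ∀ q : ℕ, (hq : q.Prime) →
        ((q ∈ Q → ∀ w ∈ S, B ((c : ℚ) • u) w ∈ Ip q hq) ∧
         (q ∉ Q → ∀ w ∈ T, B ((c : ℚ) • u) w ∈ Ip q hq)) := by
  refine ⟨ordCompl[p] D, (Nat.ordCompl_pos p hD).ne', Nat.not_dvd_ordCompl hp hD, ?_⟩
  intro q hq
  haveI := Fact.mk hq
  constructor
  · intro hqQ w hw
    have hqp : q ≠ p := fun h => hpQ (h ▸ hqQ)
    obtain ⟨k, hk⟩ := hDS u hu w hw
    rw [LinearMap.BilinForm.smul_left]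
    set x : ℚ := (↑(ordCompl[p] D) : ℚ) * B u w with hx
    have h2 : ((ordProj[p] D : ℕ) : ℚ) * x = (k : ℚ) := by
      rw [hx, ← mul_assoc, ← Nat.cast_mul, Nat.ordProj_mul_ordCompl_eq_self D p, hk]
    rcases eq_or_ne x 0 with h0 | h0
    · rw [h0]; exact Subring.zero_mem _
    have hm0 : ((ordProj[p] D : ℕ) : ℚ) ≠ 0 := by
      exact_mod_cast (Nat.ordProj_pos D p).ne'
    have hk0 : (k : ℚ) ≠ 0 := by
      rw [← h2]; exact mul_ne_zero hm0 h0
    have hvm : padicValRat q ((ordProj[p] D : ℕ) : ℚ) = 0 := by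
      rw [padicValRat.of_nat]
      norm_cast
      refine padicValNat.eq_zero_of_not_dvd (fun h => hqp ?_)
      exact (Nat.prime_dvd_prime_iff_eq hq hp).mp (hq.dvd_of_dvd_pow h)
    have hmul : padicValRat q (((ordProj[p] D : ℕ) : ℚ)) + padicValRat q x
        = padicValRat q ((k : ℚ)) := by
      rw [← padicValRat.mul hm0 h0, h2]
    have hknn : 0 ≤ padicValRat q ((k : ℚ)) := (mem_Ip (hp := hq)).mp (intCast_mem_Ip (hp := hq) k)
    rw [mem_Ip]
    omega
  · intro hqQ w hw
    obtain ⟨k, hk⟩ := hST u hu w hw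
    rw [LinearMap.BilinForm.smul_left, hk]
    exact Subring.mul_mem _ (by exact_mod_cast intCast_mem_Ip (hp := hq) (ordCompl[p] D : ℤ))
      (intCast_mem_Ip k)

lemma pair_mem_of_repr (B : LinearMap.BilinForm ℚ (Fin n → ℚ)) {ι : Type} [Fintype ι]
    (R : Subring ℚ) (e : Module.Basis ι ℚ (Fin n → ℚ)) (f : ι → (Fin n → ℚ))
    (hrepr : ∀ x i, e.repr x i = B x (f i)) (v m : Fin n → ℚ)
    (h1 : ∀ i, B m (f i) ∈ R) (h2 : ∀ i, B v (e i) ∈ R) : B v m ∈ R := by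
  have hm : B v m = ∑ i, e.repr m i * B v (e i) := by
    conv_lhs => rw [← e.sum_repr m]
    rw [map_sum]
    exact Finset.sum_congr rfl fun i _ => by rw [LinearMap.BilinForm.smul_right]
  rw [hm]
  exact Subring.sum_mem _ fun i _ => by
    rw [hrepr m i]; exact Subring.mul_mem _ (h1 i) (h2 i)

/-- For a full-rank lattice `Λ` in a rational quadratic space,
`(Λ^{*Π₁})^{*Π₂} = Λ^{*(Π₁ Δ Π₂)}`; in particular `(Λ^{*Π})^{*Π} = Λ`. -/
theorem piDual_piDual (B : LinearMap.BilinForm ℚ (Fin n → ℚ))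
    (hsymm : ∀ x y, B x y = B y x)
    (hpos : ∀ x, x ≠ 0 → 0 < B x x)
    (Λ : Submodule ℤ (Fin n → ℚ)) (hfg : Λ.FG)
    (hspan : Submodule.span ℚ (Λ : Set (Fin n → ℚ)) = ⊤)
    (P₁ P₂ : Set ℕ) :
    piDual B (piDual B (Λ : Set (Fin n → ℚ)) P₁) P₂
        = piDual B (Λ : Set (Fin n → ℚ)) (symmDiff P₁ P₂) ∧
    piDual B (piDual B (Λ : Set (Fin n → ℚ)) P₁) P₁ = (Λ : Set (Fin n → ℚ)) := by
  classical
  obtain ⟨ι, hι, b, hΛ⟩ := exists_basis Λ hfg hspan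
  have hB : B.Nondegenerate := by
    refine ⟨fun v hv => ?_, fun v hv => ?_⟩ <;>
    by_contra h <;>
    exact (hpos v h).ne' (hv v)
  have hBsymm : B.IsSymm := ⟨fun x y => hsymm x y⟩
  set b' := B.dualBasis hB b with hb'def
  have hbb' : b = B.dualBasis hB b' :=
    (LinearMap.BilinForm.dualBasis_dualBasis hB hBsymm b).symm
  have reprb : ∀ x i, b.repr x i = B x (b' i) := by
    intro x i
    conv_lhs => rw [hbb']
    rw [LinearMap.BilinForm.dualBasis_repr_apply]
  have reprb' : ∀ x i, b'.repr x i = B x (b i) := fun x i =>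
    LinearMap.BilinForm.dualBasis_repr_apply hB b x i
  set N' : Submodule ℤ (Fin n → ℚ) := Submodule.span ℤ (Set.range ⇑b') with hN'
  have hdual1 : dualLattice B (Λ : Set (Fin n → ℚ)) = (N' : Set (Fin n → ℚ)) := by
    rw [hΛ]; exact dualLattice_span B hB b
  have hdual2 : dualLattice B (N' : Set (Fin n → ℚ)) = (Λ : Set (Fin n → ℚ)) := by
    rw [hN', dualLattice_span B hB b', ← hbb', ← hΛ]
  -- integral pairing between Λ and N'
  have hpair : ∀ u ∈ (Λ : Set (Fin n → ℚ)), ∀ w ∈ (N' : Set (Fin n → ℚ)),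
      ∃ k : ℤ, B u w = (k : ℚ) := by
    intro u hu w hw
    have hw' : w ∈ dualLattice B (Λ : Set (Fin n → ℚ)) := by rw [hdual1]; exact hw
    obtain ⟨k, hk⟩ := hw' u hu
    exact ⟨k, by rw [hsymm u w, hk]⟩
  have hpair' : ∀ u ∈ (N' : Set (Fin n → ℚ)), ∀ w ∈ (Λ : Set (Fin n → ℚ)),
      ∃ k : ℤ, B u w = (k : ℚ) := by
    intro u hu w hw
    obtain ⟨k, hk⟩ := hpair w hw u hu
    exact ⟨k, by rw [hsymm u w, hk]⟩
  obtain ⟨D₁, hD₁, hDen1⟩ := exists_denom B ⇑b ⇑b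
  obtain ⟨D₂, hD₂, hDen2⟩ := exists_denom B ⇑b' ⇑b'
  have hDen1Λ : ∀ u ∈ (Λ : Set (Fin n → ℚ)), ∀ w ∈ (Λ : Set (Fin n → ℚ)),
      ∃ k : ℤ, (D₁ : ℚ) * B u w = (k : ℚ) := by
    intro u hu w hw
    rw [hΛ] at hu hw
    exact hDen1 u hu w hw
  have hDen2N' : ∀ u ∈ (N' : Set (Fin n → ℚ)), ∀ w ∈ (N' : Set (Fin n → ℚ)),
      ∃ k : ℤ, (D₂ : ℚ) * B u w = (k : ℚ) := hDen2
  have hbmem : ∀ i, (b i) ∈ (Λ : Set (Fin n → ℚ)) := by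
    intro i
    rw [hΛ]
    exact Submodule.subset_span (Set.mem_range_self i)
  have hb'mem : ∀ i, (b' i) ∈ (N' : Set (Fin n → ℚ)) :=
    fun i => Submodule.subset_span (Set.mem_range_self i)
  -- membership in piDual, in subring form
  have memPi : ∀ (Q : Set ℕ) (v : Fin n → ℚ), v ∈ piDual B (Λ : Set (Fin n → ℚ)) Q ↔
      ∀ q : ℕ, (hq : q.Prime) →
        ((q ∈ Q → ∀ u ∈ (Λ : Set (Fin n → ℚ)), B v u ∈ Ip q hq) ∧
         (q ∉ Q → ∀ u ∈ (N' : Set (Fin n → ℚ)), B v u ∈ Ip q hq)) := by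
    intro Q v
    constructor
    · intro h q hq
      refine ⟨fun hqQ u hu => (h q hq).1 hqQ u hu, fun hqQ u hu => ?_⟩
      exact (h q hq).2 hqQ u (by rw [hdual1]; exact hu)
    · intro h q hq
      refine ⟨fun hqQ u hu => (h q hq).1 hqQ u hu, fun hqQ u hu => ?_⟩
      exact (h q hq).2 hqQ u (by rw [← hdual1]; exact hu)
  -- key local comparison
  have keyA : ∀ (Q : Set ℕ) (q : ℕ) (hq : q.Prime) (v : Fin n → ℚ),
      (q ∉ Q → ((∀ m ∈ piDual B (Λ : Set (Fin n → ℚ)) Q, B v m ∈ Ip q hq) ↔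
        (∀ u ∈ (Λ : Set (Fin n → ℚ)), B v u ∈ Ip q hq))) ∧
      (q ∈ Q → ((∀ m ∈ piDual B (Λ : Set (Fin n → ℚ)) Q, B v m ∈ Ip q hq) ↔
        (∀ u ∈ (N' : Set (Fin n → ℚ)), B v u ∈ Ip q hq))) := by
    intro Q q hq v
    constructor
    · intro hqQ
      constructor
      · intro h u hu
        obtain ⟨c, hc0, hcp, hcmem⟩ := exists_scaled_mem B (Λ : Set (Fin n → ℚ))
          (N' : Set (Fin n → ℚ)) Q hpair D₁ hD₁ hDen1Λ q hq hqQ u hu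
        have hcu : ((c : ℚ)) • u ∈ piDual B (Λ : Set (Fin n → ℚ)) Q := (memPi Q _).mpr hcmem
        have h3 := h _ hcu
        rw [LinearMap.BilinForm.smul_right] at h3
        exact Ip_of_natCast_mul hc0 hcp h3
      · intro h m hm
        have hm' := ((memPi Q m).mp hm q hq).2 hqQ
        exact pair_mem_of_repr B (Ip q hq) b b' reprb v m
          (fun i => hm' (b' i) (hb'mem i)) (fun i => h (b i) (hbmem i))
    · intro hqQ
      have hqQc : q ∉ Qᶜ := fun hc => hc hqQ
      constructor
      · intro h u hu
        obtain ⟨c, hc0, hcp, hcmem⟩ := exists_scaled_mem B (N' : Set (Fin n → ℚ))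
          (Λ : Set (Fin n → ℚ)) Qᶜ hpair' D₂ hD₂ hDen2N' q hq hqQc u hu
        have hcu : ((c : ℚ)) • u ∈ piDual B (Λ : Set (Fin n → ℚ)) Q := by
          refine (memPi Q _).mpr (fun q' hq' => ?_)
          refine ⟨fun hq'Q w hw => (hcmem q' hq').2 (fun hc => hc hq'Q) w hw,
            fun hq'Q w hw => (hcmem q' hq').1 hq'Q w hw⟩
        have h3 := h _ hcu
        rw [LinearMap.BilinForm.smul_right] at h3
        exact Ip_of_natCast_mul hc0 hcp h3
      · intro h m hm
        have hm' := ((memPi Q m).mp hm q hq).1 hqQ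
        exact pair_mem_of_repr B (Ip q hq) b' b reprb' v m
          (fun i => hm' (b i) (hbmem i)) (fun i => h (b' i) (hb'mem i))
  -- the dual lattice of a piDual
  have hDM : ∀ Q : Set ℕ, ∀ v : Fin n → ℚ,
      v ∈ dualLattice B (piDual B (Λ : Set (Fin n → ℚ)) Q) ↔
      ∀ q : ℕ, (hq : q.Prime) →
        ((q ∈ Q → ∀ u ∈ (N' : Set (Fin n → ℚ)), B v u ∈ Ip q hq) ∧
         (q ∉ Q → ∀ u ∈ (Λ : Set (Fin n → ℚ)), B v u ∈ Ip q hq)) := by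
    intro Q v
    constructor
    · intro h q hq
      have hall : ∀ m ∈ piDual B (Λ : Set (Fin n → ℚ)) Q, B v m ∈ Ip q hq := by
        intro m hm
        obtain ⟨k, hk⟩ := h m hm
        rw [hk]
        exact intCast_mem_Ip k
      exact ⟨fun hqQ => ((keyA Q q hq v).2 hqQ).mp hall,
        fun hqQ => ((keyA Q q hq v).1 hqQ).mp hall⟩
    · intro h m hm
      refine exists_int_of_forall_Ip (fun q hq => ?_)
      by_cases hqQ : q ∈ Q
      · exact ((keyA Q q hq v).2 hqQ).mpr ((h q hq).1 hqQ) m hm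
      · exact ((keyA Q q hq v).1 hqQ).mpr ((h q hq).2 hqQ) m hm
  -- the dual lattice of a piDual is the piDual with complemented prime set
  have hDM' : ∀ Q : Set ℕ,
      dualLattice B (piDual B (Λ : Set (Fin n → ℚ)) Q)
        = piDual B (Λ : Set (Fin n → ℚ)) Qᶜ := by
    intro Q
    ext v
    rw [show v ∈ dualLattice B (piDual B (Λ : Set (Fin n → ℚ)) Q) ↔ dualLattice B (piDual B (Λ : Set (Fin n → ℚ)) Q) v from Iff.rfl, show (dualLattice B (piDual B (Λ : Set (Fin n → ℚ)) Q)) v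
        = (v ∈ dualLattice B (piDual B (Λ : Set (Fin n → ℚ)) Q)) from rfl,
      hDM Q v, memPi Qᶜ v]
    refine forall_congr' fun q => forall_congr' fun hq => ?_
    by_cases hqQ : q ∈ Q
    · have h1 : q ∉ Qᶜ := fun hc => hc hqQ
      constructor
      · intro h
        exact ⟨fun hc => absurd hqQ hc, fun _ => h.1 hqQ⟩
      · intro h
        exact ⟨fun _ => h.2 h1, fun hc => absurd hqQ hc⟩
    · have h1 : q ∈ Qᶜ := hqQ
      constructor
      · intro h
        exact ⟨fun _ => h.2 hqQ, fun hc => absurd h1 hc⟩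
      · intro h
        exact ⟨fun hc => absurd hc hqQ, fun _ => h.1 h1⟩
  -- unfolding membership in the double piDual
  have memPi2 : ∀ (Q R : Set ℕ) (v : Fin n → ℚ),
      v ∈ piDual B (piDual B (Λ : Set (Fin n → ℚ)) Q) R ↔
      ∀ q : ℕ, (hq : q.Prime) →
        ((q ∈ R → ∀ m ∈ piDual B (Λ : Set (Fin n → ℚ)) Q, B v m ∈ Ip q hq) ∧
         (q ∉ R → ∀ m ∈ piDual B (Λ : Set (Fin n → ℚ)) Qᶜ, B v m ∈ Ip q hq)) := by
    intro Q R v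
    constructor
    · intro h q hq
      refine ⟨fun hqR m hm => (h q hq).1 hqR m hm, fun hqR m hm => ?_⟩
      exact (h q hq).2 hqR m (by rw [hDM' Q]; exact hm)
    · intro h q hq
      refine ⟨fun hqR m hm => (h q hq).1 hqR m hm, fun hqR m hm => ?_⟩
      exact (h q hq).2 hqR m (by rw [← hDM' Q]; exact hm)
  -- main statement, general second parameter
  have main : ∀ R : Set ℕ,
      piDual B (piDual B (Λ : Set (Fin n → ℚ)) P₁) R
        = piDual B (Λ : Set (Fin n → ℚ)) (symmDiff P₁ R) := by
    intro R
    ext v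
    rw [memPi2 P₁ R v, memPi (symmDiff P₁ R) v]
    refine forall_congr' fun q => forall_congr' fun hq => ?_
    by_cases hqP : q ∈ P₁
    · have hqPc : q ∉ P₁ᶜ := fun hc => hc hqP
      rw [(keyA P₁ q hq v).2 hqP, (keyA P₁ᶜ q hq v).1 hqPc]
      have hΔ : q ∈ symmDiff P₁ R ↔ q ∉ R := by
        simp [Set.mem_symmDiff, hqP]
      constructor
      · intro h
        exact ⟨fun hc => h.2 (hΔ.mp hc), fun hc => h.1 (by by_contra hR; exact hc (hΔ.mpr hR))⟩
      · intro h
        exact ⟨fun hR => h.2 (fun hc => (hΔ.mp hc) hR), fun hR => h.1 (hΔ.mpr hR)⟩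
    · have hqPc : q ∈ P₁ᶜ := hqP
      rw [(keyA P₁ q hq v).1 hqP, (keyA P₁ᶜ q hq v).2 hqPc]
      have hΔ : q ∈ symmDiff P₁ R ↔ q ∈ R := by
        simp [Set.mem_symmDiff, hqP]
      constructor
      · intro h
        exact ⟨fun hc => h.1 (hΔ.mp hc), fun hc => h.2 (fun hR => hc (hΔ.mpr hR))⟩
      · intro h
        exact ⟨fun hR => h.1 (hΔ.mpr hR), fun hR => h.2 (fun hc => hR (hΔ.mp hc))⟩
  refine ⟨main P₂, ?_⟩
  have h2 := main P₁
  rw [symmDiff_self] at h2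
  rw [h2]
  -- piDual with the empty prime set is Λ itself
  ext v
  rw [memPi (⊥ : Set ℕ) v]
  constructor
  · intro h
    have hv : v ∈ dualLattice B (N' : Set (Fin n → ℚ)) := by
      intro u hu
      refine exists_int_of_forall_Ip (fun q hq => ?_)
      exact (h q hq).2 (by simp) u hu
    rw [hdual2] at hv
    exact hv
  · intro hv q hq
    refine ⟨fun hc => absurd hc (by simp), fun _ u hu => ?_⟩
    obtain ⟨k, hk⟩ := hpair v hv u hu
    rw [hk]
    exact intCast_mem_Ip k
end

section
/- If W_{m₁} and W_{m₂} are Atkin-Lehner matrices of levels m₁ and m₂ for Γ₀(N) (with m₁, m₂ exact divisors of N), then W_{m₁}W_{m₂} is, modulo Γ₀(N), an Atkin-Lehner matrix of level m₁m₂/gcd(m₁,m₂)². -/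
/-- Membership in `Γ₀(N)` for an integer matrix: determinant `1` and lower-left entry
divisible by `N`. -/
def IsGamma0 (N : ℕ) (g : Matrix (Fin 2) (Fin 2) ℤ) : Prop :=
  g.det = 1 ∧ (N : ℤ) ∣ g 1 0

/-- `W` is an Atkin-Lehner matrix of level `m` for `Γ₀(N)`:  `m` is an exact divisor of `N`
and `W = m^{-1/2}·[[ma, b],[c, d]]` with integer entries, `m ∣ d`, `m ∣ c`, `N ∣ c`, and
determinant `1` (i.e. `m·a·d − b·c = m`). -/
def IsAtkinLehner (N m : ℕ) (W : Matrix (Fin 2) (Fin 2) ℝ) : Prop :=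
  m ∣ N ∧ Nat.Coprime m (N / m) ∧
  ∃ a b c d : ℤ, (m : ℤ) ∣ d ∧ (m : ℤ) ∣ c ∧ (N : ℤ) ∣ c ∧
    (m : ℤ) * a * d - b * c = (m : ℤ) ∧
    W = (Real.sqrt m)⁻¹ • !![((m : ℤ) * a : ℝ), (b : ℝ); (c : ℝ), (d : ℝ)]

/-- The product of Atkin-Lehner matrices of levels `m₁` and `m₂` is, modulo `Γ₀(N)`,
an Atkin-Lehner matrix of level `m₁m₂/gcd(m₁,m₂)²`. -/
theorem atkinLehner_mul (N m₁ m₂ : ℕ) (hN : 0 < N)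
    (W₁ W₂ : Matrix (Fin 2) (Fin 2) ℝ)
    (h₁ : IsAtkinLehner N m₁ W₁) (h₂ : IsAtkinLehner N m₂ W₂) :
    ∃ (γ : Matrix (Fin 2) (Fin 2) ℤ) (W₃ : Matrix (Fin 2) (Fin 2) ℝ),
      IsGamma0 N γ ∧ IsAtkinLehner N (m₁ * m₂ / (Nat.gcd m₁ m₂) ^ 2) W₃ ∧
      W₁ * W₂ = (γ.map (Int.cast : ℤ → ℝ)) * W₃ := by
  obtain ⟨hm₁N, hcop₁, a₁, b₁, c₁, d₁, hd₁, hc₁m, hc₁N, hdet₁, hW₁⟩ := h₁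
  obtain ⟨hm₂N, hcop₂, a₂, b₂, c₂, d₂, hd₂, hc₂m, hc₂N, hdet₂, hW₂⟩ := h₂
  obtain ⟨v₁, hv₁⟩ := hd₁
  obtain ⟨u₁, hu₁⟩ := hc₁N
  obtain ⟨v₂, hv₂⟩ := hd₂
  obtain ⟨u₂, hu₂⟩ := hc₂N
  have hm₁pos : 0 < m₁ := Nat.pos_of_dvd_of_pos hm₁N hN
  have hm₂pos : 0 < m₂ := Nat.pos_of_dvd_of_pos hm₂N hN
  set g := Nat.gcd m₁ m₂ with hg
  have hgpos : 0 < g := Nat.gcd_pos_of_pos_left _ hm₁pos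
  set e₁ := m₁ / g with he₁def
  set e₂ := m₂ / g with he₂def
  have he₁ : m₁ = g * e₁ := (Nat.mul_div_cancel' (Nat.gcd_dvd_left m₁ m₂)).symm
  have he₂ : m₂ = g * e₂ := (Nat.mul_div_cancel' (Nat.gcd_dvd_right m₁ m₂)).symm
  have he₁pos : 0 < e₁ := Nat.div_pos (Nat.le_of_dvd hm₁pos (Nat.gcd_dvd_left m₁ m₂)) hgpos
  have he₂pos : 0 < e₂ := Nat.div_pos (Nat.le_of_dvd hm₂pos (Nat.gcd_dvd_right m₁ m₂)) hgpos
  -- decompose N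
  have hlcm : Nat.lcm m₁ m₂ ∣ N := Nat.lcm_dvd hm₁N hm₂N
  have hlcm_eq : Nat.lcm m₁ m₂ = g * (e₁ * e₂) := by
    have h1 : g * Nat.lcm m₁ m₂ = g * (g * (e₁ * e₂)) := by
      rw [Nat.gcd_mul_lcm m₁ m₂]; nth_rewrite 1 [he₁, he₂]; ring
    exact Nat.eq_of_mul_eq_mul_left hgpos h1
  obtain ⟨k, hk⟩ := hlcm
  have hN' : N = g * e₁ * e₂ * k := by rw [hk, hlcm_eq]; ring
  -- quotient computations
  have hNm₁ : N / m₁ = e₂ * k := by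
    rw [show N = m₁ * (e₂ * k) by rw [hN', he₁]; ring]
    exact Nat.mul_div_cancel_left _ hm₁pos
  have hNm₂ : N / m₂ = e₁ * k := by
    rw [show N = m₂ * (e₁ * k) by rw [hN', he₂]; ring]
    exact Nat.mul_div_cancel_left _ hm₂pos
  have hm₃ : m₁ * m₂ / g ^ 2 = e₁ * e₂ := by
    rw [show m₁ * m₂ = g ^ 2 * (e₁ * e₂) by rw [he₁, he₂]; ring]
    exact Nat.mul_div_cancel_left _ (by positivity)
  have hNm₃ : N / (e₁ * e₂) = g * k := by
    rw [show N = (e₁ * e₂) * (g * k) by rw [hN']; ring]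
    exact Nat.mul_div_cancel_left _ (by positivity)
  -- coprimality
  rw [hNm₁] at hcop₁
  rw [hNm₂] at hcop₂
  rw [he₁] at hcop₁
  rw [he₂] at hcop₂
  -- hcop₁ : Coprime (g*e₁) (e₂*k), hcop₂ : Coprime (g*e₂) (e₁*k)
  have cop_e₁k : Nat.Coprime e₁ k :=
    (Nat.Coprime.coprime_dvd_left (dvd_mul_left e₁ g) hcop₁).coprime_dvd_right (dvd_mul_left k e₂)
  have cop_e₂k : Nat.Coprime e₂ k :=
    (Nat.Coprime.coprime_dvd_left (dvd_mul_left e₂ g) hcop₂).coprime_dvd_right (dvd_mul_left k e₁)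
  have cop_e₁g : Nat.Coprime e₁ g :=
    ((Nat.Coprime.coprime_dvd_left (dvd_mul_right g e₂) hcop₂).coprime_dvd_right
      (dvd_mul_right e₁ k)).symm
  have cop_e₂g : Nat.Coprime e₂ g :=
    ((Nat.Coprime.coprime_dvd_left (dvd_mul_right g e₁) hcop₁).coprime_dvd_right
      (dvd_mul_right e₂ k)).symm
  have cop₃ : Nat.Coprime (e₁ * e₂) (g * k) :=
    Nat.Coprime.mul (Nat.Coprime.mul_right cop_e₁g cop_e₁k)
      (Nat.Coprime.mul_right cop_e₂g cop_e₂k)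
  -- integer casts
  have hm₁Z : (m₁ : ℤ) = (g : ℤ) * (e₁ : ℤ) := by exact_mod_cast he₁
  have hm₂Z : (m₂ : ℤ) = (g : ℤ) * (e₂ : ℤ) := by exact_mod_cast he₂
  have hNZ : (N : ℤ) = (g : ℤ) * e₁ * e₂ * k := by exact_mod_cast hN'
  -- the entries of the level-m₃ matrix
  set A : ℤ := (g : ℤ) * (a₁ * a₂) + b₁ * ((k : ℤ) * u₂) with hA
  set B : ℤ := (e₁ : ℤ) * (a₁ * b₂) + (e₂ : ℤ) * (b₁ * v₂) with hB
  set C : ℤ := (e₂ : ℤ) * (a₂ * u₁) + (e₁ : ℤ) * (v₁ * u₂) with hC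
  set D : ℤ := (k : ℤ) * (u₁ * b₂) + (g : ℤ) * (v₁ * v₂) with hD
  -- unit equations from the determinants
  have key₁ : ((g : ℤ) * e₁) * ((g : ℤ) * e₁ * (a₁ * v₁) - b₁ * ((e₂ : ℤ) * ((k : ℤ) * u₁)))
      = ((g : ℤ) * e₁) * 1 := by
    rw [hv₁, hu₁, hm₁Z, hNZ] at hdet₁; linear_combination hdet₁
  have hGE₁ : ((g : ℤ) * e₁) ≠ 0 := by
    have : (0:ℤ) < (g : ℤ) * e₁ := by exact_mod_cast Nat.mul_pos hgpos he₁pos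
    omega
  have hU₁ : (g : ℤ) * e₁ * (a₁ * v₁) - b₁ * ((e₂ : ℤ) * ((k : ℤ) * u₁)) = 1 :=
    mul_left_cancel₀ hGE₁ key₁
  have key₂ : ((g : ℤ) * e₂) * ((g : ℤ) * e₂ * (a₂ * v₂) - b₂ * ((e₁ : ℤ) * ((k : ℤ) * u₂)))
      = ((g : ℤ) * e₂) * 1 := by
    rw [hv₂, hu₂, hm₂Z, hNZ] at hdet₂; linear_combination hdet₂
  have hGE₂ : ((g : ℤ) * e₂) ≠ 0 := by
    have : (0:ℤ) < (g : ℤ) * e₂ := by exact_mod_cast Nat.mul_pos hgpos he₂pos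
    omega
  have hU₂ : (g : ℤ) * e₂ * (a₂ * v₂) - b₂ * ((e₁ : ℤ) * ((k : ℤ) * u₂)) = 1 :=
    mul_left_cancel₀ hGE₂ key₂
  -- divisibilities and determinant of the witness
  have hm₃dvdN : (e₁ * e₂) ∣ N := ⟨g * k, by rw [hN']; ring⟩
  rw [hm₃]
  refine ⟨1, _, ⟨Matrix.det_one, by simp⟩,
    ⟨hm₃dvdN, by rw [hNm₃]; exact cop₃,
      A, B, (N : ℤ) * C, ((e₁ * e₂ : ℕ) : ℤ) * D, dvd_mul_right _ _,
      Dvd.dvd.mul_right (by exact_mod_cast hm₃dvdN) C, dvd_mul_right _ _, ?_, rfl⟩, ?_⟩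
  · -- determinant identity
    push_cast
    rw [hNZ]
    linear_combination ((e₁:ℤ) * e₂ * ((g : ℤ) * e₂ * (a₂ * v₂) - b₂ * ((e₁ : ℤ) * ((k : ℤ) * u₂)))) * hU₁ + ((e₁:ℤ) * e₂) * hU₂
  · -- the product identity W₁ * W₂ = 1 * W₃
    have hgR : ((g:ℕ):ℝ) ≠ 0 := by exact_mod_cast hgpos.ne'
    have hsq3pos : 0 < Real.sqrt ((e₁ * e₂ : ℕ) : ℝ) :=
      Real.sqrt_pos.mpr (by exact_mod_cast Nat.mul_pos he₁pos he₂pos)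
    have hmmN : m₁ * m₂ = g ^ 2 * (e₁ * e₂) := by rw [he₁, he₂]; ring
    have hsqrt : Real.sqrt (m₁:ℝ) * Real.sqrt (m₂:ℝ)
        = (g:ℝ) * Real.sqrt ((e₁ * e₂ : ℕ) : ℝ) := by
      rw [← Real.sqrt_mul (by positivity)]
      rw [show ((m₁:ℝ) * (m₂:ℝ)) = (g:ℝ)^2 * ((e₁*e₂:ℕ):ℝ) by exact_mod_cast hmmN]
      rw [Real.sqrt_mul (by positivity), Real.sqrt_sq (by positivity)]
    have hscl : ∀ x y : ℝ, x = (g:ℝ) * y →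
        (Real.sqrt (m₁:ℝ))⁻¹ * ((Real.sqrt (m₂:ℝ))⁻¹ * x)
          = (Real.sqrt ((e₁ * e₂ : ℕ) : ℝ))⁻¹ * y := by
      intro x y hxy
      subst hxy
      rw [← mul_assoc, ← mul_inv, hsqrt, mul_inv]
      field_simp
    have hz00 : (m₁:ℤ) * a₁ * ((m₂:ℤ) * a₂) + b₁ * c₂
        = (g:ℤ) * (((e₁ * e₂ : ℕ) : ℤ) * A) := by
      rw [hu₂, hm₁Z, hm₂Z, hNZ]; push_cast; ring
    have hz01 : (m₁:ℤ) * a₁ * b₂ + b₁ * d₂ = (g:ℤ) * B := by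
      rw [hv₂, hm₁Z, hm₂Z]; push_cast; ring
    have hz10 : c₁ * ((m₂:ℤ) * a₂) + d₁ * c₂ = (g:ℤ) * ((N:ℤ) * C) := by
      rw [hu₁, hv₁, hu₂, hm₁Z, hm₂Z, hNZ]; push_cast; ring
    have hz11 : c₁ * b₂ + d₁ * d₂ = (g:ℤ) * (((e₁ * e₂ : ℕ) : ℤ) * D) := by
      rw [hu₁, hv₁, hv₂, hm₁Z, hm₂Z, hNZ]; push_cast; ring
    rw [Matrix.map_one _ Int.cast_zero Int.cast_one, one_mul, hW₁, hW₂,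
      Matrix.smul_mul, Matrix.mul_smul, Matrix.mul_fin_two]
    ext i j
    fin_cases i <;> fin_cases j <;>
      simp only [Fin.mk_zero, Fin.mk_one, Matrix.smul_apply, smul_eq_mul, Matrix.cons_val',
        Matrix.cons_val_zero, Matrix.cons_val_one, Matrix.head_cons, Matrix.head_fin_const,
        Matrix.empty_val', Matrix.cons_val_fin_one]
    · exact hscl _ _ (by simp; exact_mod_cast hz00)
    · exact hscl _ _ (by simp; exact_mod_cast hz01)
    · exact hscl _ _ (by simp; exact_mod_cast hz10)
    · exact hscl _ _ (by simp; exact_mod_cast hz11)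
end
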